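/- (Tietze's Extension Theorem for topometric spaces) Let X be a normal topometric space, Y ⊆ X a closed subset, c < c' positive reals, and f : Y → [0,1] a continuous c-Lipschitz function (with respect to the induced topology and metric on Y). Then f extends to a continuous c'-Lipschitz function g : X → [0,1]. -/

import Mathlib

open scoped ENNReal NNReal
open Set

structure TopometricOn (X : Type*) [TopologicalSpace X] where
  d : X → X → ℝ≥0∞
  d_self : ∀ x, d x x = 0
  eq_of_d_eq_zero : ∀ x y, d x y = 0 → x = y
  d_symm : ∀ x y, d x y = d y x
  d_triangle : ∀ x y z, d x z ≤ d x y + d y z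
  lsc : LowerSemicontinuous fun p : X × X => d p.1 p.2
  refines : ∀ U : Set X, IsOpen U → ∀ x ∈ U, ∃ ε > (0 : ℝ≥0∞), ∀ y, d x y < ε → y ∈ U

namespace TopometricOn

variable {X : Type*} [TopologicalSpace X]

noncomputable def setD (T : TopometricOn X) (F G : Set X) : ℝ≥0∞ :=
  ⨅ x ∈ F, ⨅ y ∈ G, T.d x y

noncomputable def ptD (T : TopometricOn X) (x : X) (F : Set X) : ℝ≥0∞ :=
  ⨅ y ∈ F, T.d x y

def IsNormal (T : TopometricOn X) : Prop :=
  (∀ F G : Set X, IsClosed F → IsClosed G → 0 < T.setD F G →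
      ∃ U V : Set X, IsOpen U ∧ IsOpen V ∧ F ⊆ U ∧ G ⊆ V ∧ Disjoint U V) ∧
  (∀ F : Set X, IsClosed F → ∀ r : ℝ≥0∞, 0 < r → IsClosed {x | T.ptD x F ≤ r})

end TopometricOn

/-!
Call a family of pairs of closed sets with real levels `φ`-separated if every lower set lies at
distance at least `φ (t' - t)` from every upper set of a higher level `t'`. With
`φ γ = γ / c' + (c' - c) / c'² * γ²`, the sublevel and superlevel sets of `f` at the levels `k / N`
form such a family, because `f` is `c`-Lipschitz and `c * φ γ ≤ γ` on `[0, 1]`. A new level `q`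
can always be inserted: thicken the lower sets below `q` by `φ (q - t)` and the upper sets above
`q` by `φ (t' - q)`. Strict superadditivity of `φ` keeps the two finite unions at positive
distance, so normality separates them by disjoint open sets `V` and `W`, and `(Wᶜ, Vᶜ)` is the new
pair. Once every rational level is inserted, `u x = inf {q | x ∉ upper q}` is continuous,
`c'`-Lipschitz (as `φ γ ≥ γ / c'`) and `1 / N`-close to `f` on `Y`. Clamping approximations with
errors `2⁻ⁿ` into shrinking bands around one another keeps them `c'`-Lipschitz and makes them
converge uniformly to an exact extension.
-/

open Filter Topology

lemma Set.Finite.lt_biInf {α ι : Type*} [CompleteLinearOrder α] {s : Set ι}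
    (hs : s.Finite) {f : ι → α} {a : α} (ha : a < ⊤) (h : ∀ i ∈ s, a < f i) :
    a < ⨅ i ∈ s, f i := by
  rcases s.eq_empty_or_nonempty with rfl | ⟨i, hi⟩
  · simpa using ha
  · exact (hs.lt_ciInf_iff ⟨i, hi, by simp⟩).2 h

namespace TopometricOn

/-- The roles of `lower` and `upper` are `{u ≤ level}` and `{u ≥ level}` for the function `u`
being built. -/
structure LevelPair (X : Type*) where
  lower : Set X
  upper : Set X
  level : ℝ

section Distance

variable {X : Type*} [TopologicalSpace X] (T : TopometricOn X)

lemma ptD_le {x y : X} {S : Set X} (hy : y ∈ S) : T.ptD x S ≤ T.d x y :=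
  iInf₂_le y hy

lemma le_ptD_iff {x : X} {S : Set X} {r : ℝ≥0∞} : r ≤ T.ptD x S ↔ ∀ y ∈ S, r ≤ T.d x y :=
  le_iInf₂_iff

lemma ptD_le_ptD_add (x y : X) (S : Set X) : T.ptD x S ≤ T.ptD y S + T.d x y :=
  calc ⨅ z ∈ S, T.d x z ≤ ⨅ z ∈ S, T.d y z + T.d x y :=
        iInf₂_mono fun z _ => (T.d_triangle x y z).trans_eq (add_comm _ _)
    _ = T.ptD y S + T.d x y := by simp only [ptD, ENNReal.iInf_add]

lemma setD_le {x y : X} {A B : Set X} (hx : x ∈ A) (hy : y ∈ B) : T.setD A B ≤ T.d x y :=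
  iInf₂_le_of_le x hx (iInf₂_le y hy)

lemma le_setD_iff {A B : Set X} {r : ℝ≥0∞} :
    r ≤ T.setD A B ↔ ∀ x ∈ A, ∀ y ∈ B, r ≤ T.d x y := by
  simp only [setD, le_iInf_iff]

lemma setD_comm (A B : Set X) : T.setD A B = T.setD B A :=
  le_antisymm (T.le_setD_iff.2 fun y hy x hx => (T.setD_le hx hy).trans_eq (T.d_symm x y))
    (T.le_setD_iff.2 fun x hx y hy => (T.setD_le hy hx).trans_eq (T.d_symm y x))

def thick (F : Set X) (r : ℝ≥0∞) : Set X := {x | T.ptD x F ≤ r}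

lemma le_setD_of_subset_compl_thick {A F : Set X} {r : ℝ≥0∞} (h : A ⊆ (T.thick F r)ᶜ) :
    r ≤ T.setD A F :=
  T.le_setD_iff.2 fun _ hx _ hy => (not_le.1 fun h' => h hx h').le.trans (T.ptD_le hy)

lemma setD_thick_left {P Q : Set X} {ρ σ : ℝ≥0∞} (hρ : ρ ≠ ⊤) (h : ρ + σ ≤ T.setD P Q) :
    σ ≤ T.setD (T.thick P ρ) Q := by
  refine T.le_setD_iff.2 fun x hx y hy => (ENNReal.add_le_add_iff_left hρ).1 ?_
  calc ρ + σ ≤ T.ptD y P :=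
        T.le_ptD_iff.2 fun z hz => (h.trans (T.setD_le hz hy)).trans_eq (T.d_symm z y)
    _ ≤ T.ptD x P + T.d y x := T.ptD_le_ptD_add y x P
    _ ≤ ρ + T.d x y := by rw [T.d_symm]; gcongr; exact hx

lemma setD_thick_thick {P Q : Set X} {ρ₁ ρ₂ σ : ℝ≥0∞} (h₁ : ρ₁ ≠ ⊤) (h₂ : ρ₂ ≠ ⊤)
    (h : ρ₁ + ρ₂ + σ ≤ T.setD P Q) : σ ≤ T.setD (T.thick P ρ₁) (T.thick Q ρ₂) := by
  have h' : ρ₂ + σ ≤ T.setD (T.thick P ρ₁) Q := T.setD_thick_left h₁ (by rwa [← add_assoc])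
  rw [T.setD_comm] at h' ⊢
  exact T.setD_thick_left h₂ h'

end Distance

section Lipschitz

variable {X : Type*} [TopologicalSpace X] (T : TopometricOn X)

def IsLipschitz (K : ℝ≥0) (g : X → ℝ) : Prop :=
  ∀ x y, edist (g x) (g y) ≤ K * T.d x y

variable {T} {K : ℝ≥0} {g h : X → ℝ}

lemma isLipschitz_const (s : ℝ) : T.IsLipschitz K fun _ => s := fun x y => by
  simp

lemma IsLipschitz.add_const (hg : T.IsLipschitz K g) (s : ℝ) :
    T.IsLipschitz K fun x => g x + s := fun x y => by
  simpa only [edist_add_right] using hg x y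

lemma IsLipschitz.max (hg : T.IsLipschitz K g) (hh : T.IsLipschitz K h) :
    T.IsLipschitz K fun x => max (g x) (h x) := fun x y => by
  have := lipschitzWith_max.edist_le_mul (g x, h x) (g y, h y)
  rw [ENNReal.coe_one, one_mul, Prod.edist_eq] at this
  exact this.trans (max_le (hg x y) (hh x y))

lemma IsLipschitz.min (hg : T.IsLipschitz K g) (hh : T.IsLipschitz K h) :
    T.IsLipschitz K fun x => min (g x) (h x) := fun x y => by
  have := lipschitzWith_min.edist_le_mul (g x, h x) (g y, h y)
  rw [ENNReal.coe_one, one_mul, Prod.edist_eq] at this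
  exact this.trans (max_le (hg x y) (hh x y))

lemma IsLipschitz.of_tendsto {g : ℕ → X → ℝ} {L : X → ℝ} (hg : ∀ n, T.IsLipschitz K (g n))
    (hL : ∀ x, Tendsto (fun n => g n x) atTop (𝓝 (L x))) : T.IsLipschitz K L := fun x y =>
  le_of_tendsto' ((hL x).edist (hL y)) fun n => hg n x y

end Lipschitz

section Separated

variable {X : Type*} [TopologicalSpace X] (T : TopometricOn X)

def Separated (φ : ℝ → ℝ) (S : Set (LevelPair X)) : Prop :=
  ∀ a ∈ S, ∀ b ∈ S, a.level < b.level →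
    ENNReal.ofReal (φ (b.level - a.level)) ≤ T.setD a.lower b.upper

variable {T} {φ ψ : ℝ → ℝ} {S S' : Set (LevelPair X)}

lemma Separated.mono (h : T.Separated φ S) (hS : S' ⊆ S) (hφ : ∀ γ > 0, ψ γ ≤ φ γ) :
    T.Separated ψ S' := fun a ha b hb hab =>
  (ENNReal.ofReal_le_ofReal (hφ _ (sub_pos.2 hab))).trans (h a (hS ha) b (hS hb) hab)

lemma Separated.disjoint (h : T.Separated φ S) {a b : LevelPair X} (ha : a ∈ S) (hb : b ∈ S)
    (hab : a.level < b.level) (hφ : 0 < φ (b.level - a.level)) : Disjoint a.lower b.upper :=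
  Set.disjoint_left.2 fun x hxa hxb => (ENNReal.ofReal_pos.2 hφ).not_ge <|
    (h a ha b hb hab).trans ((T.setD_le hxa hxb).trans_eq (T.d_self x))

end Separated

section Construction

variable {X : Type*} [TopologicalSpace X] (T : TopometricOn X) {φ : ℝ → ℝ}
  {S : Set (LevelPair X)} {a : LevelPair X} {q : ℝ}

def lowerThickening (φ : ℝ → ℝ) (S : Set (LevelPair X)) (q : ℝ) : Set X :=
  ⋃ a ∈ {a ∈ S | a.level < q}, T.thick a.lower (ENNReal.ofReal (φ (q - a.level)))

def upperThickening (φ : ℝ → ℝ) (S : Set (LevelPair X)) (q : ℝ) : Set X :=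
  ⋃ b ∈ {b ∈ S | q < b.level}, T.thick b.upper (ENNReal.ofReal (φ (b.level - q)))

variable {T}

lemma thick_subset_lowerThickening (ha : a ∈ S) (hq : a.level < q) :
    T.thick a.lower (ENNReal.ofReal (φ (q - a.level))) ⊆ T.lowerThickening φ S q :=
  subset_biUnion_of_mem (u := fun a : LevelPair X =>
    T.thick a.lower (ENNReal.ofReal (φ (q - a.level)))) ⟨ha, hq⟩

lemma thick_subset_upperThickening (ha : a ∈ S) (hq : q < a.level) :
    T.thick a.upper (ENNReal.ofReal (φ (a.level - q))) ⊆ T.upperThickening φ S q :=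
  subset_biUnion_of_mem (u := fun b : LevelPair X =>
    T.thick b.upper (ENNReal.ofReal (φ (b.level - q)))) ⟨ha, hq⟩

lemma isClosed_lowerThickening (hT : T.IsNormal) (hφpos : ∀ γ > 0, 0 < φ γ) (hS : S.Finite)
    (hcl : ∀ a ∈ S, IsClosed a.lower) (q : ℝ) : IsClosed (T.lowerThickening φ S q) :=
  (hS.subset (sep_subset _ _)).isClosed_biUnion fun a ha =>
    hT.2 _ (hcl a ha.1) _ (ENNReal.ofReal_pos.2 (hφpos _ (sub_pos.2 ha.2)))

lemma isClosed_upperThickening (hT : T.IsNormal) (hφpos : ∀ γ > 0, 0 < φ γ) (hS : S.Finite)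
    (hcl : ∀ a ∈ S, IsClosed a.upper) (q : ℝ) : IsClosed (T.upperThickening φ S q) :=
  (hS.subset (sep_subset _ _)).isClosed_biUnion fun b hb =>
    hT.2 _ (hcl b hb.1) _ (ENNReal.ofReal_pos.2 (hφpos _ (sub_pos.2 hb.2)))

lemma setD_lowerThickening_upperThickening_pos (hφpos : ∀ γ > 0, 0 < φ γ)
    (hφadd : ∀ a > 0, ∀ b > 0, φ a + φ b < φ (a + b)) (hS : S.Finite) (hsep : T.Separated φ S)
    (q : ℝ) : 0 < T.setD (T.lowerThickening φ S q) (T.upperThickening φ S q) := by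
  -- the strict superadditivity of `φ` leaves a positive gap between each pair of thickenings
  let gap (p : LevelPair X × LevelPair X) : ℝ≥0∞ := ENNReal.ofReal
    (φ (p.2.level - p.1.level) - φ (q - p.1.level) - φ (p.2.level - q))
  have hgap : 0 < ⨅ p ∈ {a ∈ S | a.level < q} ×ˢ {b ∈ S | q < b.level}, gap p :=
    ((hS.subset (sep_subset _ _)).prod (hS.subset (sep_subset _ _))).lt_biInf
      ENNReal.zero_lt_top fun p hp => ENNReal.ofReal_pos.2 <| by
        have := hφadd _ (sub_pos.2 hp.1.2) _ (sub_pos.2 hp.2.2)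
        rw [sub_add_sub_cancel'] at this
        linarith
  refine hgap.trans_le (T.le_setD_iff.2 fun x hx y hy => ?_)
  simp only [lowerThickening, upperThickening, mem_iUnion₂] at hx hy
  obtain ⟨a, ha, hxa⟩ := hx
  obtain ⟨b, hb, hyb⟩ := hy
  have hsum : ENNReal.ofReal (φ (q - a.level)) + ENNReal.ofReal (φ (b.level - q)) +
      gap (a, b) ≤ T.setD a.lower b.upper := by
    refine le_trans (le_of_eq ?_) (hsep a ha.1 b hb.1 (ha.2.trans hb.2))
    have hφa := (hφpos _ (sub_pos.2 ha.2)).le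
    have hφb := (hφpos _ (sub_pos.2 hb.2)).le
    have := hφadd _ (sub_pos.2 ha.2) _ (sub_pos.2 hb.2)
    rw [sub_add_sub_cancel'] at this
    rw [← ENNReal.ofReal_add hφa hφb, ← ENNReal.ofReal_add (add_nonneg hφa hφb) (by linarith)]
    congr 1
    ring
  exact (iInf₂_le (a, b) ⟨ha, hb⟩).trans <|
    (T.setD_thick_thick ENNReal.ofReal_ne_top ENNReal.ofReal_ne_top hsum).trans
      (T.setD_le hxa hyb)

theorem exists_insert_separated (hT : T.IsNormal) (hφpos : ∀ γ > 0, 0 < φ γ)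
    (hφadd : ∀ a > 0, ∀ b > 0, φ a + φ b < φ (a + b)) (hS : S.Finite)
    (hcl : ∀ a ∈ S, IsClosed a.lower ∧ IsClosed a.upper) (hsep : T.Separated φ S) (q : ℝ) :
    ∃ a : LevelPair X, a.level = q ∧ IsClosed a.lower ∧ IsClosed a.upper ∧
      a.lower ∪ a.upper = univ ∧ T.Separated φ (insert a S) := by
  obtain ⟨V, W, hV, hW, hAV, hBW, hVW⟩ := hT.1 _ _
    (isClosed_lowerThickening hT hφpos hS (fun a ha => (hcl a ha).1) q)
    (isClosed_upperThickening hT hφpos hS (fun a ha => (hcl a ha).2) q)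
    (setD_lowerThickening_upperThickening_pos hφpos hφadd hS hsep q)
  refine ⟨⟨Wᶜ, Vᶜ, q⟩, rfl, hW.isClosed_compl, hV.isClosed_compl,
    by rw [← compl_inter, hVW.symm.inter_eq, compl_empty], ?_⟩
  rintro a (rfl | ha) b (rfl | hb) hab
  · exact absurd hab (lt_irrefl _)
  · exact T.le_setD_of_subset_compl_thick <| compl_subset_compl.2 <|
      (thick_subset_upperThickening hb hab).trans hBW
  · rw [T.setD_comm]
    exact T.le_setD_of_subset_compl_thick <| compl_subset_compl.2 <|
      (thick_subset_lowerThickening ha hab).trans hAV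
  · exact hsep a ha b hb hab

theorem exists_separated_superset (hT : T.IsNormal) (hφpos : ∀ γ > 0, 0 < φ γ)
    (hφadd : ∀ a > 0, ∀ b > 0, φ a + φ b < φ (a + b)) {S₀ : Set (LevelPair X)}
    (hS₀ : S₀.Finite) (hcl : ∀ a ∈ S₀, IsClosed a.lower ∧ IsClosed a.upper)
    (hsep : T.Separated φ S₀) (e : ℕ → ℝ) :
    ∃ S ⊇ S₀, (∀ a ∈ S, IsClosed a.lower ∧ IsClosed a.upper) ∧ T.Separated φ S ∧
      ∀ n, ∃ a ∈ S, a.level = e n ∧ a.lower ∪ a.upper = univ := by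
  have : Nonempty (LevelPair X) := ⟨⟨∅, ∅, 0⟩⟩
  choose! next hnext using fun (S : Set (LevelPair X)) (q : ℝ)
    (hS : S.Finite ∧ (∀ a ∈ S, IsClosed a.lower ∧ IsClosed a.upper) ∧ T.Separated φ S) =>
    exists_insert_separated hT hφpos hφadd hS.1 hS.2.1 hS.2.2 q
  let seq : ℕ → Set (LevelPair X) := fun n => Nat.rec S₀ (fun n S => insert (next S (e n)) S) n
  have hseq : ∀ n, (seq n).Finite ∧ (∀ a ∈ seq n, IsClosed a.lower ∧ IsClosed a.upper) ∧
      T.Separated φ (seq n) := by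
    intro n
    induction n with
    | zero => exact ⟨hS₀, hcl, hsep⟩
    | succ n ih =>
      obtain ⟨-, hlo, hup, -, hsep'⟩ := hnext _ (e n) ih
      refine ⟨ih.1.insert _, ?_, hsep'⟩
      rintro a (rfl | ha)
      exacts [⟨hlo, hup⟩, ih.2.1 a ha]
  have hmono : Monotone seq := monotone_nat_of_le_succ fun n => subset_insert _ _
  refine ⟨⋃ n, seq n, subset_iUnion seq 0, ?_, ?_, fun n => ?_⟩
  · simp only [mem_iUnion]
    rintro a ⟨n, ha⟩
    exact (hseq n).2.1 a ha
  · simp only [Separated, mem_iUnion]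
    rintro a ⟨m, ha⟩ b ⟨n, hb⟩
    exact (hseq (max m n)).2.2 a (hmono (le_max_left m n) ha) b (hmono (le_max_right m n) hb)
  · obtain ⟨hq, -, -, hcover, -⟩ := hnext _ (e n) (hseq n)
    exact ⟨_, mem_iUnion.2 ⟨n + 1, mem_insert _ _⟩, hq, hcover⟩

end Construction

noncomputable def gauge (c c' γ : ℝ) : ℝ := γ / c' + (c' - c) / c' ^ 2 * γ ^ 2

section Gauge

variable {c c' : ℝ}

lemma div_le_gauge (hcc' : c ≤ c') (γ : ℝ) : γ / c' ≤ gauge c c' γ :=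
  le_add_of_nonneg_right <| mul_nonneg (div_nonneg (sub_nonneg.2 hcc') (sq_nonneg _)) (sq_nonneg _)

lemma gauge_pos (hc : 0 ≤ c) (hcc' : c < c') {γ : ℝ} (hγ : 0 < γ) : 0 < gauge c c' γ :=
  (div_pos hγ (hc.trans_lt hcc')).trans_le (div_le_gauge hcc'.le γ)

lemma gauge_add_lt (hc : 0 ≤ c) (hcc' : c < c') {a b : ℝ} (ha : 0 < a) (hb : 0 < b) :
    gauge c c' a + gauge c c' b < gauge c c' (a + b) := by
  have : 0 < (c' - c) / c' ^ 2 * a * b :=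
    mul_pos (mul_pos (div_pos (sub_pos.2 hcc') (pow_pos (hc.trans_lt hcc') 2)) ha) hb
  have : gauge c c' (a + b) = gauge c c' a + gauge c c' b + 2 * ((c' - c) / c' ^ 2 * a * b) := by
    unfold gauge; ring
  linarith

lemma mul_gauge_le (hc : 0 ≤ c) (hcc' : c < c') {γ : ℝ} (hγ₀ : 0 ≤ γ) (hγ₁ : γ ≤ 1) :
    c * gauge c c' γ ≤ γ := by
  have hc' : 0 < c' := hc.trans_lt hcc'
  have hsq : γ ^ 2 ≤ γ := by nlinarith
  calc c * gauge c c' γ ≤ c * (γ / c' + (c' - c) / c' ^ 2 * γ) := by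
        unfold gauge
        have : 0 ≤ (c' - c) / c' ^ 2 := div_nonneg (sub_pos.2 hcc').le (by positivity)
        gcongr
    _ = γ * (c * (2 * c' - c) / c' ^ 2) := by field_simp; ring
    _ ≤ γ * 1 := by
        gcongr
        rw [div_le_one (by positivity)]
        nlinarith [sq_nonneg (c' - c)]
    _ = γ := mul_one γ

end Gauge

section LevelFunction

variable {X : Type*} {S : Set (LevelPair X)} {a : LevelPair X} {x : X} {t : ℝ}

noncomputable def levelFun (S : Set (LevelPair X)) (x : X) : ℝ :=
  sInf (insert 1 (LevelPair.level '' {a ∈ S | x ∉ a.upper}))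

lemma le_levelFun (ht : t ≤ 1) (h : ∀ a ∈ S, x ∉ a.upper → t ≤ a.level) : t ≤ levelFun S x :=
  le_csInf (insert_nonempty _ _) (by rintro _ (rfl | ⟨a, ⟨ha, hx⟩, rfl⟩); exacts [ht, h a ha hx])

variable [TopologicalSpace X] (T : TopometricOn X)

structure IsUrysohnFamily (K : ℝ≥0) (S : Set (LevelPair X)) : Prop where
  isClosed_lower : ∀ a ∈ S, IsClosed a.lower
  isClosed_upper : ∀ a ∈ S, IsClosed a.upper
  union_eq : ∀ a ∈ S, a.lower ∪ a.upper = univ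
  level_mem : ∀ a ∈ S, a.level ∈ Icc (0 : ℝ) 1
  separated : T.Separated (· / K) S
  dense : ∀ s t : ℝ, 0 ≤ s → s < t → t ≤ 1 → ∃ a ∈ S, a.level ∈ Ioo s t

variable {T} {K : ℝ≥0}

namespace IsUrysohnFamily

lemma mem_lower_or_mem_upper (hS : T.IsUrysohnFamily K S) (ha : a ∈ S) (x : X) :
    x ∈ a.lower ∨ x ∈ a.upper := by
  rw [← mem_union, hS.union_eq a ha]
  exact mem_univ x

lemma bddBelow (hS : T.IsUrysohnFamily K S) (x : X) :
    BddBelow (insert 1 (LevelPair.level '' {a ∈ S | x ∉ a.upper})) :=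
  ⟨0, by rintro _ (rfl | ⟨a, ⟨ha, -⟩, rfl⟩); exacts [zero_le_one, (hS.level_mem a ha).1]⟩

lemma levelFun_le_one (hS : T.IsUrysohnFamily K S) (x : X) : levelFun S x ≤ 1 :=
  csInf_le (hS.bddBelow x) (mem_insert _ _)

lemma levelFun_nonneg (hS : T.IsUrysohnFamily K S) (x : X) : 0 ≤ levelFun S x :=
  le_levelFun zero_le_one fun a ha _ => (hS.level_mem a ha).1

lemma levelFun_le_level (hS : T.IsUrysohnFamily K S) (ha : a ∈ S) (hx : x ∉ a.upper) :
    levelFun S x ≤ a.level :=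
  csInf_le (hS.bddBelow x) (mem_insert_of_mem _ ⟨a, ⟨ha, hx⟩, rfl⟩)

lemma levelFun_le_of_forall (hS : T.IsUrysohnFamily K S) (ht : 0 ≤ t)
    (h : ∀ a ∈ S, t < a.level → x ∉ a.upper) : levelFun S x ≤ t := by
  refine le_of_forall_gt_imp_ge_of_dense fun t' htt' => ?_
  rcases le_or_gt 1 t' with h1 | h1
  · exact (hS.levelFun_le_one x).trans h1
  · obtain ⟨a, ha, hta, hat'⟩ := hS.dense t t' ht htt' h1.le
    exact (hS.levelFun_le_level ha (h a ha hta)).trans hat'.le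

lemma levelFun_le_of_mem_lower (hS : T.IsUrysohnFamily K S) (hK : 0 < K) (ha : a ∈ S)
    (hx : x ∈ a.lower) : levelFun S x ≤ a.level :=
  hS.levelFun_le_of_forall (hS.level_mem a ha).1 fun _ hb hab =>
    disjoint_left.1 (hS.separated.disjoint ha hb hab (div_pos (sub_pos.2 hab) hK)) hx

lemma level_le_levelFun_of_mem_upper (hS : T.IsUrysohnFamily K S) (hK : 0 < K) (ha : a ∈ S)
    (hx : x ∈ a.upper) : a.level ≤ levelFun S x :=
  le_levelFun (hS.level_mem a ha).2 fun _ hb hxb => le_of_not_gt fun hba =>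
    disjoint_left.1 (hS.separated.disjoint hb ha hba (div_pos (sub_pos.2 hba) hK))
      ((hS.mem_lower_or_mem_upper hb x).resolve_right hxb) hx

theorem continuous_levelFun (hS : T.IsUrysohnFamily K S) (hK : 0 < K) :
    Continuous (levelFun S) := by
  refine continuous_iff_lower_upperSemicontinuous.2 ⟨fun x s hs => ?_, fun x s hs => ?_⟩
  · rcases lt_or_ge s 0 with hs0 | hs0
    · exact Eventually.of_forall fun x' => hs0.trans_le (hS.levelFun_nonneg x')
    obtain ⟨a, ha, hsa, hax⟩ := hS.dense s (levelFun S x) hs0 hs (hS.levelFun_le_one x)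
    have hxa : x ∉ a.lower := fun hx => (hS.levelFun_le_of_mem_lower hK ha hx).not_gt hax
    filter_upwards [(hS.isClosed_lower a ha).isOpen_compl.mem_nhds hxa] with x' hx'
    exact hsa.trans_le <| hS.level_le_levelFun_of_mem_upper hK ha <|
      (hS.mem_lower_or_mem_upper ha x').resolve_left hx'
  · obtain ⟨r, hr, hrs⟩ := exists_lt_of_csInf_lt (insert_nonempty _ _) hs
    rcases hr with rfl | ⟨a, ⟨ha, hxa⟩, rfl⟩
    · exact Eventually.of_forall fun x' => (hS.levelFun_le_one x').trans_lt hrs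
    · filter_upwards [(hS.isClosed_upper a ha).isOpen_compl.mem_nhds hxa] with x' hx'
      exact (hS.levelFun_le_level ha hx').trans_lt hrs

lemma levelFun_le_add (hS : T.IsUrysohnFamily K S) (hK : 0 < K) {x y : X}
    (hxy : T.d x y ≠ ⊤) : levelFun S y ≤ levelFun S x + K * (T.d x y).toReal := by
  have hD := ENNReal.toReal_nonneg (a := T.d x y)
  rw [← sub_le_iff_le_add]
  refine le_levelFun (by linarith [hS.levelFun_le_one y, mul_nonneg K.coe_nonneg hD])
    fun a ha hxa => sub_le_iff_le_add.2 <|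
      hS.levelFun_le_of_forall (by linarith [(hS.level_mem a ha).1, mul_nonneg K.coe_nonneg hD])
        fun b hb hab hyb => ?_
  have hlt : a.level < b.level := by linarith [mul_nonneg K.coe_nonneg hD]
  have hsep : ENNReal.ofReal ((b.level - a.level) / K) ≤ T.d x y :=
    (hS.separated a ha b hb hlt).trans <|
      T.setD_le ((hS.mem_lower_or_mem_upper ha x).resolve_right hxa) hyb
  rw [← ENNReal.ofReal_toReal hxy, ENNReal.ofReal_le_ofReal_iff hD,
    div_le_iff₀ (NNReal.coe_pos.2 hK)] at hsep
  linarith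

theorem isLipschitz_levelFun (hS : T.IsUrysohnFamily K S) (hK : 0 < K) :
    T.IsLipschitz K (levelFun S) := by
  intro x y
  by_cases hxy : T.d x y = ⊤
  · rw [hxy, ENNReal.mul_top (by exact_mod_cast hK.ne')]
    exact le_top
  have hyx : T.d y x ≠ ⊤ := by rwa [T.d_symm]
  have h₁ := hS.levelFun_le_add hK hxy
  have h₂ := hS.levelFun_le_add hK hyx
  rw [T.d_symm] at h₂
  rw [edist_dist, Real.dist_eq, ← ENNReal.ofReal_toReal hxy, ← ENNReal.ofReal_coe_nnreal,
    ← ENNReal.ofReal_mul K.coe_nonneg]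
  exact ENNReal.ofReal_le_ofReal (abs_sub_le_iff.2 ⟨by linarith, by linarith⟩)

end IsUrysohnFamily

end LevelFunction

def levelPairOf {X : Type*} {Y : Set X} (f : Y → ℝ) (t : ℝ) : LevelPair X :=
  ⟨(↑) '' {y | f y ≤ t}, (↑) '' {y | t ≤ f y}, t⟩

section Approximation

variable {X : Type*} [TopologicalSpace X] (T : TopometricOn X) {Y : Set X} {f : Y → ℝ}

lemma isClosed_levelPairOf (hY : IsClosed Y) (hf : Continuous f) (t : ℝ) :
    IsClosed (levelPairOf f t).lower ∧ IsClosed (levelPairOf f t).upper :=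
  ⟨hY.isClosedEmbedding_subtypeVal.isClosedMap _ (isClosed_le hf continuous_const),
    hY.isClosedEmbedding_subtypeVal.isClosedMap _ (isClosed_le continuous_const hf)⟩

theorem separated_image_levelPairOf {c : ℝ≥0}
    (hf : ∀ a b : Y, edist (f a) (f b) ≤ c * T.d a b) {φ : ℝ → ℝ}
    (hφ : ∀ γ ∈ Ioc (0 : ℝ) 1, c * φ γ ≤ γ) {s : Set ℝ} (hs : s ⊆ Icc 0 1) :
    T.Separated φ (levelPairOf f '' s) := by
  rintro _ ⟨t, ht, rfl⟩ _ ⟨t', ht', rfl⟩ (htt' : t < t')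
  refine T.le_setD_iff.2 ?_
  rintro _ ⟨y, hy : f y ≤ t, rfl⟩ _ ⟨y', hy' : t' ≤ f y', rfl⟩
  have hγ : t' - t ∈ Ioc (0 : ℝ) 1 := ⟨sub_pos.2 htt', by linarith [(hs ht).1, (hs ht').2]⟩
  have h₁ : ENNReal.ofReal (t' - t) ≤ c * T.d y y' := by
    refine le_trans ?_ (hf y y')
    rw [edist_dist, Real.dist_eq, abs_sub_comm]
    exact ENNReal.ofReal_le_ofReal ((by linarith : t' - t ≤ f y' - f y).trans (le_abs_self _))
  rcases eq_or_ne c 0 with rfl | hc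
  · rw [ENNReal.coe_zero, zero_mul, nonpos_iff_eq_zero, ENNReal.ofReal_eq_zero] at h₁
    exact absurd h₁ (not_le.2 hγ.1)
  · refine (ENNReal.mul_le_mul_iff_right (by exact_mod_cast hc) ENNReal.coe_ne_top).1
      (le_trans ?_ h₁)
    rw [← ENNReal.ofReal_coe_nnreal, ← ENNReal.ofReal_mul c.coe_nonneg]
    exact ENNReal.ofReal_le_ofReal (hφ _ hγ)

variable {T}

theorem IsUrysohnFamily.abs_levelFun_sub_le {K : ℝ≥0} {S' S : Set (LevelPair X)}
    (hS' : T.IsUrysohnFamily K S') (hsub : S' ⊆ S) {φ : ℝ → ℝ} (hsep : T.Separated φ S)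
    (hφ : ∀ γ > 0, 0 < φ γ) (hf01 : ∀ y, f y ∈ Icc (0 : ℝ) 1) {N : ℕ} (hN : 0 < N)
    (hS : ∀ k ≤ N, levelPairOf f (k / N : ℝ) ∈ S) (y : Y) :
    |levelFun S' y - f y| ≤ 1 / N := by
  have hN' : (0 : ℝ) < N := Nat.cast_pos.2 hN
  have hfy : 0 ≤ N * f y := mul_nonneg hN'.le (hf01 y).1
  have hfyN : N * f y ≤ N := mul_le_of_le_one_right hN'.le (hf01 y).2
  rw [abs_sub_le_iff]
  constructor
  · set k := ⌈N * f y⌉₊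
    have hk₁ : f y ≤ k / N := by
      rw [le_div_iff₀ hN', mul_comm]
      exact Nat.le_ceil _
    have hk₂ : (k / N : ℝ) < f y + 1 / N := by
      rw [div_lt_iff₀ hN', add_mul, one_div_mul_cancel hN'.ne', mul_comm]
      exact Nat.ceil_lt_add_one hfy
    have : levelFun S' y ≤ f y + 1 / N :=
      hS'.levelFun_le_of_forall (by linarith [(hf01 y).1, one_div_pos.2 hN']) fun a ha hya hy =>
        disjoint_left.1 (hsep.disjoint (hS k (Nat.ceil_le.2 hfyN)) (hsub ha) (hk₂.trans hya)
          (hφ _ (sub_pos.2 (hk₂.trans hya)))) ⟨y, hk₁, rfl⟩ hy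
    linarith
  · set k := ⌊N * f y⌋₊
    have hk₁ : (k / N : ℝ) ≤ f y := by
      rw [div_le_iff₀ hN', mul_comm]
      exact Nat.floor_le hfy
    have hk₂ : f y - 1 / N < k / N := by
      rw [lt_div_iff₀ hN', sub_mul, one_div_mul_cancel hN'.ne', mul_comm, sub_lt_iff_lt_add]
      exact Nat.lt_floor_add_one _
    have : f y - 1 / N ≤ levelFun S' y :=
      le_levelFun (by linarith [(hf01 y).2, one_div_pos.2 hN']) fun a ha hya => le_of_not_gt
        fun hlt => disjoint_left.1 (hsep.disjoint (hsub ha) (hS k (Nat.floor_le_of_le hfyN))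
          (hlt.trans hk₂) (hφ _ (sub_pos.2 (hlt.trans hk₂))))
          ((hS'.mem_lower_or_mem_upper ha y).resolve_right hya) ⟨y, hk₁, rfl⟩
    linarith

theorem exists_approx_extension (hT : T.IsNormal) (hY : IsClosed Y) {c c' : ℝ≥0} (hcc' : c < c')
    (hfc : Continuous f) (hfl : ∀ a b : Y, edist (f a) (f b) ≤ c * T.d a b)
    (hf01 : ∀ y, f y ∈ Icc (0 : ℝ) 1) {N : ℕ} (hN : 0 < N) :
    ∃ u : X → ℝ, Continuous u ∧ T.IsLipschitz c' u ∧ (∀ x, u x ∈ Icc (0 : ℝ) 1) ∧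
      ∀ y : Y, |u y - f y| ≤ 1 / N := by
  have hc : (0 : ℝ) ≤ c := c.coe_nonneg
  have hcc'' : (c : ℝ) < c' := hcc'
  have hc' : 0 < c' := pos_of_gt hcc'
  have hφpos : ∀ γ > 0, 0 < gauge c c' γ := fun γ => gauge_pos hc hcc''
  have hgrid : (fun k : ℕ => (k / N : ℝ)) '' Iic N ⊆ Icc 0 1 := by
    rintro _ ⟨k, hk, rfl⟩
    exact ⟨by positivity, div_le_one_of_le₀ (Nat.cast_le.2 hk) (Nat.cast_nonneg N)⟩
  obtain ⟨e, he⟩ := exists_surjective_nat ℚ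
  obtain ⟨S, hS₀, hcl, hsep, hlevel⟩ := exists_separated_superset hT hφpos
    (fun a ha b hb => gauge_add_lt hc hcc'' ha hb) (((finite_Iic N).image _).image _)
    (by rintro _ ⟨t, -, rfl⟩; exact isClosed_levelPairOf hY hfc t)
    (T.separated_image_levelPairOf hfl (fun γ hγ => mul_gauge_le hc hcc'' hγ.1.le hγ.2) hgrid)
    fun n => e n
  set S' := {a ∈ S | a.lower ∪ a.upper = univ ∧ a.level ∈ Icc (0 : ℝ) 1}
  have hS' : T.IsUrysohnFamily c' S' :=
    { isClosed_lower := fun a ha => (hcl a ha.1).1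
      isClosed_upper := fun a ha => (hcl a ha.1).2
      union_eq := fun a ha => ha.2.1
      level_mem := fun a ha => ha.2.2
      separated := hsep.mono (sep_subset _ _) fun γ _ => div_le_gauge hcc''.le γ
      dense := fun s t hs hst ht => by
        obtain ⟨q, hsq, hqt⟩ := exists_rat_btwn hst
        obtain ⟨n, rfl⟩ := he q
        obtain ⟨a, ha, hlev, hcov⟩ := hlevel n
        rw [← hlev] at hsq hqt
        exact ⟨a, ⟨ha, hcov, by linarith, by linarith⟩, hsq, hqt⟩ }
  exact ⟨levelFun S', hS'.continuous_levelFun hc', hS'.isLipschitz_levelFun hc',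
    fun x => ⟨hS'.levelFun_nonneg x, hS'.levelFun_le_one x⟩,
    hS'.abs_levelFun_sub_le (sep_subset _ _) hsep hφpos hf01 hN
      fun k hk => hS₀ ⟨_, ⟨k, hk, rfl⟩, rfl⟩⟩

end Approximation

section Clamp

variable {X : Type*}

noncomputable def clampAround (u g : X → ℝ) (s : ℝ) (x : X) : ℝ :=
  max (min (u x) (g x + s)) (g x - s)

variable {u g : X → ℝ} {s : ℝ} {x : X}

lemma abs_clampAround_sub_le (hs : 0 ≤ s) : |clampAround u g s x - g x| ≤ s := by
  simp only [clampAround, abs_le]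
  grind

lemma clampAround_of_abs_le (h : |u x - g x| ≤ s) : clampAround u g s x = u x := by
  simp only [clampAround]
  grind [abs_le]

lemma clampAround_mem_Icc (hu : u x ∈ Icc (0 : ℝ) 1) (hg : g x ∈ Icc (0 : ℝ) 1) (hs : 0 ≤ s) :
    clampAround u g s x ∈ Icc (0 : ℝ) 1 := by
  simp only [clampAround, mem_Icc] at *
  grind

noncomputable def clampSeq (u : ℕ → X → ℝ) : ℕ → X → ℝ
  | 0 => fun _ => 1 / 2
  | n + 1 => clampAround (u n) (clampSeq u n) (2 * (1 / 2) ^ n)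

lemma clampSeq_mem_Icc {u : ℕ → X → ℝ} (hu : ∀ n x, u n x ∈ Icc (0 : ℝ) 1) (n : ℕ) (x : X) :
    clampSeq u n x ∈ Icc (0 : ℝ) 1 := by
  induction n generalizing x with
  | zero => norm_num [clampSeq]
  | succ n ih => exact clampAround_mem_Icc (hu n x) (ih x) (by positivity)

lemma dist_clampSeq_succ_le (u : ℕ → X → ℝ) (n : ℕ) (x : X) :
    dist (clampSeq u n x) (clampSeq u (n + 1) x) ≤ 2 * (1 / 2) ^ n := by
  rw [dist_comm, Real.dist_eq]
  exact abs_clampAround_sub_le (by positivity)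

lemma abs_clampSeq_sub_le {Y : Set X} {f : Y → ℝ} (hf01 : ∀ y, f y ∈ Icc (0 : ℝ) 1)
    {u : ℕ → X → ℝ} (huf : ∀ n (y : Y), |u n y - f y| ≤ (1 / 2) ^ (n + 1)) (n : ℕ) (y : Y) :
    |clampSeq u n y - f y| ≤ (1 / 2) ^ n := by
  induction n with
  | zero =>
    simp only [clampSeq, pow_zero, abs_le]
    constructor <;> linarith [(hf01 y).1, (hf01 y).2]
  | succ n ih =>
    have hband : |u n y - clampSeq u n y| ≤ 2 * (1 / 2) ^ n :=
      calc |u n y - clampSeq u n y| ≤ |u n y - f y| + |clampSeq u n y - f y| :=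
            (abs_sub_le _ _ _).trans_eq (by rw [abs_sub_comm (f y)])
        _ ≤ (1 / 2) ^ (n + 1) + (1 / 2) ^ n := add_le_add (huf n y) ih
        _ ≤ 2 * (1 / 2) ^ n := by
            rw [pow_succ]
            linarith [pow_nonneg (by norm_num : (0 : ℝ) ≤ 1 / 2) n]
    show |clampAround (u n) (clampSeq u n) _ y - f y| ≤ _
    rw [clampAround_of_abs_le hband]
    exact huf n y

end Clamp

section Iteration

variable {X : Type*} [TopologicalSpace X] {T : TopometricOn X} {K : ℝ≥0}

lemma IsLipschitz.clampAround {u g : X → ℝ} (hu : T.IsLipschitz K u) (hg : T.IsLipschitz K g)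
    (s : ℝ) : T.IsLipschitz K (clampAround u g s) :=
  (hu.min (hg.add_const s)).max (by simpa only [← sub_eq_add_neg] using hg.add_const (-s))

lemma continuous_clampSeq {u : ℕ → X → ℝ} (hu : ∀ n, Continuous (u n)) (n : ℕ) :
    Continuous (clampSeq u n) := by
  induction n with
  | zero => exact continuous_const
  | succ n ih => exact ((hu n).min (ih.add continuous_const)).max (ih.sub continuous_const)

lemma isLipschitz_clampSeq {u : ℕ → X → ℝ} (hu : ∀ n, T.IsLipschitz K (u n)) (n : ℕ) :
    T.IsLipschitz K (clampSeq u n) := by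
  induction n with
  | zero => exact isLipschitz_const _
  | succ n ih => exact (hu n).clampAround ih _

theorem exists_limit_of_dist_le_geometric {g : ℕ → X → ℝ} (hcont : ∀ n, Continuous (g n))
    (hlip : ∀ n, T.IsLipschitz K (g n)) (h01 : ∀ n x, g n x ∈ Icc (0 : ℝ) 1)
    (hstep : ∀ n x, dist (g n x) (g (n + 1) x) ≤ 2 * (1 / 2) ^ n) :
    ∃ L : X → ℝ, Continuous L ∧ T.IsLipschitz K L ∧ (∀ x, L x ∈ Icc (0 : ℝ) 1) ∧
      ∀ x, Tendsto (fun n => g n x) atTop (𝓝 (L x)) := by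
  choose L hL using fun x => cauchySeq_tendsto_of_complete <|
    cauchySeq_of_le_geometric (1 / 2) 2 (by norm_num) fun n => hstep n x
  have hunif : TendstoUniformly g L atTop := by
    have hbound : Tendsto (fun n : ℕ => 2 * (1 / 2 : ℝ) ^ n / (1 - 1 / 2)) atTop (𝓝 0) := by
      simpa using ((tendsto_pow_atTop_nhds_zero_of_lt_one (by norm_num : (0 : ℝ) ≤ 1 / 2)
        (by norm_num)).const_mul 2).div_const (1 - 1 / 2)
    refine Metric.tendstoUniformly_iff.2 fun ε hε => ?_
    filter_upwards [hbound.eventually (gt_mem_nhds hε)] with n hn x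
    rw [dist_comm]
    exact (dist_le_of_le_geometric_of_tendsto (1 / 2) 2 (by norm_num) (fun n => hstep n x)
      (hL x) n).trans_lt hn
  exact ⟨L, hunif.continuous (Frequently.of_forall hcont), IsLipschitz.of_tendsto hlip hL,
    fun x => isClosed_Icc.mem_of_tendsto (hL x) (Eventually.of_forall fun n => h01 n x), hL⟩

theorem exists_extension_of_approx {Y : Set X} {f : Y → ℝ} (hf01 : ∀ y, f y ∈ Icc (0 : ℝ) 1)
    (happrox : ∀ ε > 0, ∃ u : X → ℝ, Continuous u ∧ T.IsLipschitz K u ∧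
      (∀ x, u x ∈ Icc (0 : ℝ) 1) ∧ ∀ y : Y, |u y - f y| ≤ ε) :
    ∃ g : X → ℝ, Continuous g ∧ T.IsLipschitz K g ∧ (∀ x, g x ∈ Icc (0 : ℝ) 1) ∧
      ∀ y : Y, g y = f y := by
  choose u hu hlu hu01 huf using fun n : ℕ => happrox ((1 / 2) ^ (n + 1)) (by positivity)
  obtain ⟨L, hLc, hLl, hL01, hL⟩ := exists_limit_of_dist_le_geometric
    (continuous_clampSeq hu) (isLipschitz_clampSeq hlu) (clampSeq_mem_Icc hu01)
    (dist_clampSeq_succ_le u)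
  refine ⟨L, hLc, hLl, hL01, fun y => tendsto_nhds_unique (hL y) ?_⟩
  refine tendsto_iff_dist_tendsto_zero.2 <| squeeze_zero (fun _ => dist_nonneg)
    (fun n => (Real.dist_eq _ _).trans_le (abs_clampSeq_sub_le hf01 huf n y)) ?_
  exact tendsto_pow_atTop_nhds_zero_of_lt_one (by norm_num) (by norm_num)

end Iteration

end TopometricOn

theorem topometric_tietze_general {X : Type*} [TopologicalSpace X]
    (T : TopometricOn X) (hT : T.IsNormal) (Y : Set X) (hY : IsClosed Y)
    (c c' : ℝ≥0) (hcc' : c < c') (f : Y → ℝ)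
    (hfc : Continuous f)
    (hfl : ∀ a b : Y, edist (f a) (f b) ≤ (c : ℝ≥0∞) * T.d a b)
    (hf01 : ∀ y, f y ∈ Set.Icc (0 : ℝ) 1) :
    ∃ g : X → ℝ, Continuous g ∧ (∀ x y, edist (g x) (g y) ≤ (c' : ℝ≥0∞) * T.d x y) ∧
      (∀ x, g x ∈ Set.Icc (0 : ℝ) 1) ∧ ∀ y : Y, g y = f y :=
  TopometricOn.exists_extension_of_approx hf01 fun ε hε => by
    obtain ⟨N, hN⟩ := exists_nat_one_div_lt hε
    obtain ⟨u, hu, hlu, hu01, huf⟩ :=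
      TopometricOn.exists_approx_extension hT hY hcc' hfc hfl hf01 N.succ_pos
    exact ⟨u, hu, hlu, hu01, fun y => (huf y).trans (by exact_mod_cast hN.le)⟩

/-- Tietze's Extension Theorem for topometric spaces. -/
theorem topometric_tietze {X : Type*} [TopologicalSpace X]
    (T : TopometricOn X) (hT : T.IsNormal) (Y : Set X) (hY : IsClosed Y)
    (c c' : ℝ≥0) (hc : 0 < c) (hcc' : c < c') (f : Y → ℝ)
    (hfc : Continuous f)
    (hfl : ∀ a b : Y, edist (f a) (f b) ≤ (c : ℝ≥0∞) * T.d a b)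
    (hf01 : ∀ y, f y ∈ Set.Icc (0 : ℝ) 1) :
    ∃ g : X → ℝ, Continuous g ∧ (∀ x y, edist (g x) (g y) ≤ (c' : ℝ≥0∞) * T.d x y) ∧
      (∀ x, g x ∈ Set.Icc (0 : ℝ) 1) ∧ ∀ y : Y, g y = f y :=
  topometric_tietze_general T hT Y hY c c' hcc' f hfc hfl hf01
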